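/- Let X be a ℤ^d-valued random vector. Suppose the characteristic function of X has no zeroes on ℝ^d, and there exists a = (a_1,…,a_d) ∈ ℝ^d with a_1,…,a_d linearly independent over ℚ such that a^T X is infinitely divisible. Then the distribution of X is infinitely divisible. -/

import Mathlib

open MeasureTheory Complex Real Filter Topology

noncomputable section

/-- convolution of two measures on an additive monoid -/
def mconv {V : Type*} [MeasurableSpace V] [Add V] (μ ν : Measure V) : Measure V :=
  (μ.prod ν).map (fun p => p.1 + p.2)

/-- n-fold convolution power -/
def convPow {V : Type*} [MeasurableSpace V] [AddMonoid V] (μ : Measure V) : ℕ → Measure V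
  | 0 => Measure.dirac 0
  | n + 1 => mconv μ (convPow μ n)

/-- a probability measure is infinitely divisible -/
def InfDiv {V : Type*} [MeasurableSpace V] [AddMonoid V] (μ : Measure V) : Prop :=
  ∀ n : ℕ, 0 < n → ∃ ρ : Measure V, IsProbabilityMeasure ρ ∧ μ = convPow ρ n

/-- characteristic function of a measure on ℝ^d -/
def charFun {d : ℕ} (μ : Measure (Fin d → ℝ)) (z : Fin d → ℝ) : ℂ :=
  ∫ x, Complex.exp (Complex.I * (∑ j, z j * x j)) ∂μ

/-- embedding of the lattice ℤ^d into ℝ^d -/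
def intCast {d : ℕ} (n : Fin d → ℤ) : Fin d → ℝ := fun j => (n j : ℝ)

/-- μ is concentrated on ℤ^d -/
def ZdValued {d : ℕ} (μ : Measure (Fin d → ℝ)) : Prop :=
  μ (Set.range (intCast (d := d))) = 1

/-- integral of a complex-valued function against a (finite) signed measure -/
def sIntegral {α : Type*} [MeasurableSpace α] (ν : SignedMeasure α) (f : α → ℂ) : ℂ :=
  (∫ x, f x ∂ν.toJordanDecomposition.posPart) - ∫ x, f x ∂ν.toJordanDecomposition.negPart

/-- integral of a complex-valued function against a (finite) complex measure -/
def cIntegral {α : Type*} [MeasurableSpace α] (ν : ComplexMeasure α) (f : α → ℂ) : ℂ :=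
  sIntegral ν.re f + Complex.I * sIntegral ν.im f

/-- a vector measure vanishes outside the set `S` -/
def SupportedIn {α M : Type*} [MeasurableSpace α] [AddCommMonoid M] [TopologicalSpace M]
    (ν : VectorMeasure α M) (S : Set α) : Prop :=
  ∀ B : Set α, MeasurableSet B → B ∩ S = ∅ → ν B = 0

/-- the lattice ℤ^d minus the origin, as a subset of ℝ^d -/
def latticeNZ (d : ℕ) : Set (Fin d → ℝ) :=
  {x | ∃ n : Fin d → ℤ, n ≠ 0 ∧ x = intCast n}

/-- membership in the d-dimensional Wiener algebra -/
def InWiener {d : ℕ} (f : (Fin d → ℝ) → ℂ) : Prop :=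
  ∃ c : (Fin d → ℤ) → ℂ, Summable (fun n => ‖c n‖) ∧
    ∀ z, f z = ∑' n : Fin d → ℤ, c n * Complex.exp (Complex.I * (∑ j, (n j : ℝ) * z j))

/-- Euclidean norm on `Fin d → ℝ` -/
def enorm' {d : ℕ} (x : Fin d → ℝ) : ℝ := Real.sqrt (∑ j, x j ^ 2)

end

/-!
Write `L x = a ⬝ᵥ x`. Rational independence of `a` makes `L` injective on `ℤ^d`, so a law on `ℤ^d`
is determined by its image under `L`, and it suffices to lift an `n`-th convolution root `ρ'` of the
law of `L X` to a root on `ℝ^d`. Since `ρ'^{*n}` lives on the countable group `L(ℤ^d)`, Fubini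
forces `ρ'` onto a single coset `c + L(ℤ^d)`, and then `n c ∈ L(ℤ^d)`, say `n c = L m₀`. With
`x₀ = m₀ / n`, transport `ρ'` along the inverse of the bijection `x₀ + ℤ^d → c + L(ℤ^d)`: the
resulting root has `n`-th power on `n x₀ + ℤ^d = ℤ^d` with image law `ρ'^{*n}`, hence it is the
law of `X`.
-/

open Function Set

section Convolution

variable {V : Type*} [MeasurableSpace V]

instance isProbabilityMeasure_mconv [Add V] [MeasurableAdd₂ V] (μ ν : Measure V)
    [IsProbabilityMeasure μ] [IsProbabilityMeasure ν] : IsProbabilityMeasure (mconv μ ν) :=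
  Measure.isProbabilityMeasure_map measurable_add.aemeasurable

instance isProbabilityMeasure_convPow [AddMonoid V] [MeasurableAdd₂ V] (μ : Measure V)
    [IsProbabilityMeasure μ] (n : ℕ) : IsProbabilityMeasure (convPow μ n) := by
  induction n with
  | zero => exact Measure.dirac.isProbabilityMeasure
  | succ n ih => exact isProbabilityMeasure_mconv μ (convPow μ n)

theorem map_mconv {W : Type*} [MeasurableSpace W] [AddMonoid V] [MeasurableAdd₂ V]
    [AddMonoid W] [MeasurableAdd₂ W] (μ ν : Measure V) [SFinite μ] [SFinite ν]
    (L : V →+ W) (hL : Measurable L) :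
    (mconv μ ν).map L = mconv (μ.map L) (ν.map L) := by
  rw [mconv, mconv, Measure.map_map hL measurable_add, Measure.map_prod_map _ _ hL hL,
    Measure.map_map measurable_add (hL.prodMap hL)]
  congr 1
  funext p
  exact map_add L p.1 p.2

theorem map_convPow {W : Type*} [MeasurableSpace W] [AddMonoid V] [MeasurableAdd₂ V]
    [AddMonoid W] [MeasurableAdd₂ W] (μ : Measure V) [IsProbabilityMeasure μ]
    (L : V →+ W) (hL : Measurable L) (n : ℕ) :
    (convPow μ n).map L = convPow (μ.map L) n := by
  induction n with
  | zero => simp only [convPow, Measure.map_dirac' hL, map_zero]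
  | succ n ih => simp only [convPow, map_mconv _ _ L hL, ih]

theorem ae_mconv_of_ae [Add V] [MeasurableAdd₂ V] {μ ν : Measure V} [SFinite μ] [SFinite ν]
    {p q r : V → Prop} (hr : MeasurableSet {z | r z}) (hμ : ∀ᵐ x ∂μ, p x)
    (hν : ∀ᵐ y ∂ν, q y) (hpqr : ∀ x y, p x → q y → r (x + y)) :
    ∀ᵐ z ∂mconv μ ν, r z := by
  rw [mconv, ae_map_iff measurable_add.aemeasurable hr]
  filter_upwards [Measure.quasiMeasurePreserving_fst.ae hμ,
    Measure.quasiMeasurePreserving_snd.ae hν] with z hz₁ hz₂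
  exact hpqr _ _ hz₁ hz₂

variable [AddCommMonoid V] [MeasurableAdd₂ V] [MeasurableSingletonClass V]
  {M : Type*} [AddMonoid M] [Countable M]

theorem ae_convPow_mem_coset (f : M →+ V) (c : V) {μ : Measure V} [IsProbabilityMeasure μ]
    (hμ : ∀ᵐ x ∂μ, x ∈ range (c + f ·)) (n : ℕ) :
    ∀ᵐ x ∂convPow μ n, x ∈ range (n • c + f ·) := by
  induction n with
  | zero =>
    refine (ae_dirac_iff (countable_range _).measurableSet).2 ⟨0, ?_⟩
    simp
  | succ n ih =>
    refine ae_mconv_of_ae (countable_range _).measurableSet hμ ih ?_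
    rintro _ _ ⟨m, rfl⟩ ⟨m', rfl⟩
    exact ⟨m + m', by simp only [map_add, succ_nsmul']; abel⟩

end Convolution

theorem exists_ae_mem_coset_of_ae_convPow_mem_range {V : Type*} [MeasurableSpace V]
    [AddCommGroup V] [MeasurableAdd₂ V] [MeasurableSingletonClass V]
    {M : Type*} [AddGroup M] [Countable M] (f : M →+ V) {ρ : Measure V}
    [IsProbabilityMeasure ρ] {n : ℕ} (hn : 0 < n)
    (hρ : ∀ᵐ x ∂convPow ρ n, x ∈ range f) :
    ∃ c m₀, (∀ᵐ x ∂ρ, x ∈ range (c + f ·)) ∧ n • c = f m₀ := by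
  obtain ⟨k, rfl⟩ := Nat.exists_eq_add_one_of_ne_zero hn.ne'
  have hrange : MeasurableSet (range f) := (countable_range f).measurableSet
  obtain ⟨y, hy⟩ : ∃ y, ∀ᵐ x ∂ρ, x + y ∈ range f := by
    rw [convPow, mconv, ae_map_iff (p := (· ∈ range f)) measurable_add.aemeasurable hrange] at hρ
    exact ((Measure.ae_ae_comm (p := fun x y => x + y ∈ range f) (measurable_add hrange)).1
      (Measure.ae_ae_of_ae_prod hρ)).exists
  have hcoset : ∀ᵐ x ∂ρ, x ∈ range (-y + f ·) := by
    filter_upwards [hy] with x ⟨m, hm⟩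
    exact ⟨m, show -y + f m = x by rw [hm, add_comm x, neg_add_cancel_left]⟩
  obtain ⟨_, ⟨m₁, rfl⟩, m₂, hm⟩ :=
    (hρ.and (ae_convPow_mem_coset f (-y) hcoset (k + 1))).exists
  refine ⟨-y, m₁ - m₂, hcoset, ?_⟩
  rw [map_sub, ← hm, add_sub_cancel_right]

section Extend

variable {ι α β : Type*} [MeasurableSpace ι] [Countable ι] [MeasurableSingletonClass ι]
  [MeasurableSpace α] [MeasurableSpace β] [MeasurableSingletonClass β]

theorem measurableEmbedding_of_countable {g : ι → β} (hg : Injective g) :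
    MeasurableEmbedding g :=
  ⟨hg, measurable_of_countable g, fun s _ => (s.to_countable.image g).measurableSet⟩

theorem measurable_extend_of_injective {g : ι → β} (hg : Injective g) (t : ι → α) (e : α) :
    Measurable (extend g t fun _ => e) :=
  (measurableEmbedding_of_countable hg).measurable_extend (measurable_of_countable t)
    measurable_const

variable {L : α → β} {t : ι → α}

theorem map_extend_map_eq_self (hL : Measurable L) (ht : Injective (L ∘ t)) (e : α)
    {ν : Measure α} (hν : ∀ᵐ x ∂ν, x ∈ range t) :
    (ν.map L).map (extend (L ∘ t) t fun _ => e) = ν := by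
  rw [Measure.map_map (measurable_extend_of_injective ht t e) hL]
  conv_rhs => rw [← Measure.map_id (μ := ν)]
  refine Measure.map_congr ?_
  filter_upwards [hν] with _ ⟨m, hm⟩
  subst hm
  exact ht.extend_apply t _ m

theorem map_map_extend_eq_self (hL : Measurable L) (ht : Injective (L ∘ t)) (e : α)
    {ν : Measure β} (hν : ∀ᵐ y ∂ν, y ∈ range (L ∘ t)) :
    (ν.map (extend (L ∘ t) t fun _ => e)).map L = ν := by
  rw [Measure.map_map hL (measurable_extend_of_injective ht t e)]
  conv_rhs => rw [← Measure.map_id (μ := ν)]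
  refine Measure.map_congr ?_
  filter_upwards [hν] with _ ⟨m, hm⟩
  subst hm
  exact congrArg L (ht.extend_apply t _ m)

theorem ae_map_extend_mem_range [MeasurableSingletonClass α] (ht : Injective (L ∘ t)) (e : α)
    {ν : Measure β} (hν : ∀ᵐ y ∂ν, y ∈ range (L ∘ t)) :
    ∀ᵐ x ∂ν.map (extend (L ∘ t) t fun _ => e), x ∈ range t := by
  rw [ae_map_iff (p := (· ∈ range t)) (measurable_extend_of_injective ht t e).aemeasurable
    (countable_range t).measurableSet]
  filter_upwards [hν] with _ ⟨m, hm⟩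
  subst hm
  exact ⟨m, (ht.extend_apply t _ m).symm⟩

theorem eq_of_map_eq_of_ae_mem_range (hL : Measurable L) (ht : Injective (L ∘ t))
    [Nonempty α] {ν₁ ν₂ : Measure α} (h₁ : ∀ᵐ x ∂ν₁, x ∈ range t) (h₂ : ∀ᵐ x ∂ν₂, x ∈ range t)
    (h : ν₁.map L = ν₂.map L) : ν₁ = ν₂ := by
  let e : α := Classical.arbitrary α
  rw [← map_extend_map_eq_self hL ht e h₁, h, map_extend_map_eq_self hL ht e h₂]

end Extend

theorem exists_lift_of_ae_mem_coset {V W M : Type*} [MeasurableSpace V] [AddCommGroup V]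
    [Module ℝ V] [MeasurableAdd₂ V] [MeasurableSingletonClass V] [MeasurableSpace W]
    [AddCommGroup W] [Module ℝ W] [MeasurableSingletonClass W] [MeasurableSpace M]
    [AddGroup M] [Countable M] [MeasurableSingletonClass M]
    (f : M →+ V) (L : V →+ W) (hL : Measurable L) (hinj : Injective (L ∘ f))
    {ρ' : Measure W} [IsProbabilityMeasure ρ'] {n : ℕ} (hn : 0 < n) {c : W} {m₀ : M}
    (hc : ∀ᵐ y ∂ρ', y ∈ range fun m => c + L (f m)) (hm₀ : n • c = L (f m₀)) :
    ∃ ρ : Measure V, IsProbabilityMeasure ρ ∧ ρ.map L = ρ' ∧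
      ∀ᵐ x ∂convPow ρ n, x ∈ range f := by
  have hn' : (n : ℝ) ≠ 0 := Nat.cast_ne_zero.2 hn.ne'
  set x₀ : V := (n : ℝ)⁻¹ • f m₀
  have hLx₀ : L x₀ = c := by
    rw [map_inv_natCast_smul L ℝ ℝ, ← hm₀, ← Nat.cast_smul_eq_nsmul ℝ, inv_smul_smul₀ hn']
  have hnx₀ : n • x₀ = f m₀ := by
    rw [← Nat.cast_smul_eq_nsmul ℝ, smul_inv_smul₀ hn']
  set t : M → V := (x₀ + f ·)
  have hLt : L ∘ t = fun m => c + L (f m) := by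
    funext m
    simp only [t, comp_apply, map_add, hLx₀]
  have ht : Injective (L ∘ t) := hLt ▸ (add_right_injective c).comp hinj
  rw [← hLt] at hc
  set ρ := ρ'.map (extend (L ∘ t) t fun _ => 0)
  have hρ : IsProbabilityMeasure ρ :=
    Measure.isProbabilityMeasure_map (measurable_extend_of_injective ht t 0).aemeasurable
  refine ⟨ρ, hρ, map_map_extend_eq_self hL ht 0 hc, ?_⟩
  filter_upwards [ae_convPow_mem_coset f x₀ (ae_map_extend_mem_range ht 0 hc) n]
    with _ ⟨m, hm⟩
  exact ⟨m₀ + m, by rw [map_add, ← hnx₀, ← hm]⟩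

theorem injective_dotProduct_intCast {ι : Type*} [Fintype ι] {a : ι → ℝ}
    (ha : ∀ q : ι → ℚ, ∑ j, (q j : ℝ) * a j = 0 → q = 0) :
    Injective fun m : ι → ℤ => a ⬝ᵥ fun j => (m j : ℝ) := by
  intro m m' h
  have hq := ha (fun j => ((m j - m' j : ℤ) : ℚ)) <| by
    push_cast
    simpa only [dotProduct, sub_mul, Finset.sum_sub_distrib, mul_comm (a _), sub_eq_zero]
      using h
  funext j
  simpa [sub_eq_zero] using congrFun hq j

theorem stmt11_general {d : ℕ} {Ω : Type*} [MeasurableSpace Ω] (P : Measure Ω) [IsProbabilityMeasure P]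
    (X : Ω → Fin d → ℝ) (hX : Measurable X)
    (hZd : ∀ ω, ∃ n : Fin d → ℤ, X ω = intCast n)
    (a : Fin d → ℝ)
    (hli : ∀ q : Fin d → ℚ, (∑ j, (q j : ℝ) * a j) = 0 → q = 0)
    (hIDa : InfDiv (P.map (fun ω => ∑ j, a j * X ω j))) :
    InfDiv (P.map X) := by
  intro n hn
  let ι : (Fin d → ℤ) →+ (Fin d → ℝ) := (Int.castAddHom ℝ).compLeft (Fin d)
  let L : (Fin d → ℝ) →+ ℝ := AddMonoidHom.mk' (a ⬝ᵥ ·) (dotProduct_add a)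
  have hL : Measurable L := (continuous_const.dotProduct continuous_id).measurable
  have hinj : Injective (L ∘ ι) := injective_dotProduct_intCast hli
  have hlat : ∀ᵐ x ∂P.map X, x ∈ range ι :=
    (ae_map_iff hX.aemeasurable (countable_range ι).measurableSet).2 <|
      ae_of_all _ fun ω => (hZd ω).imp fun _ h => h.symm
  obtain ⟨ρ', hρ', hroot⟩ := hIDa n hn
  have hproj : P.map (fun ω => ∑ j, a j * X ω j) = (P.map X).map L :=
    (Measure.map_map hL hX).symm
  rw [hproj] at hroot
  obtain ⟨c, m₀, hc, hm₀⟩ := exists_ae_mem_coset_of_ae_convPow_mem_range (L.comp ι) hn <| by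
    rw [← hroot, ae_map_iff (p := (· ∈ range (L.comp ι))) hL.aemeasurable
      (countable_range _).measurableSet]
    filter_upwards [hlat] with _ ⟨m, hm⟩
    exact ⟨m, by rw [AddMonoidHom.comp_apply, hm]⟩
  obtain ⟨ρ, hρ, hρL, hρlat⟩ := exists_lift_of_ae_mem_coset ι L hL hinj hn hc hm₀
  exact ⟨ρ, hρ, eq_of_map_eq_of_ae_mem_range hL hinj hlat hρlat (by
    rw [map_convPow ρ L hL, hρL, hroot])⟩

theorem stmt11 {d : ℕ} {Ω : Type*} [MeasurableSpace Ω] (P : Measure Ω) [IsProbabilityMeasure P]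
    (X : Ω → Fin d → ℝ) (hX : Measurable X)
    (hZd : ∀ ω, ∃ n : Fin d → ℤ, X ω = intCast n)
    (hnz : ∀ z : Fin d → ℝ, charFun (P.map X) z ≠ 0)
    (a : Fin d → ℝ)
    (hli : ∀ q : Fin d → ℚ, (∑ j, (q j : ℝ) * a j) = 0 → q = 0)
    (hIDa : InfDiv (P.map (fun ω => ∑ j, a j * X ω j))) :
    InfDiv (P.map X) :=
  stmt11_general P X hX hZd a hli hIDa
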